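/- For the delay d_I = 0.1, the characteristic function Δ_E satisfies Δ_E(λ) > 0 for every real λ ≥ 0; in particular Δ_E has no nonnegative real root, so every real root of the characteristic equation at the endemic equilibrium with d_I = 0.1 is negative. -/
import Mathlib

noncomputable section TBEndemicDelay

/-- The characteristic function of the linearization at the endemic
equilibrium of the TB model (`β = 100`, Table parameter values) with delay
`dI`, restricted to the real line. -/
def ΔE (dI lam : ℝ) : ℝ :=
  lam ^ 4 + 15.112395 * lam ^ 3 - 12.243801 * lam ^ 2 - 28.331139 * lam
    - 0.966336
    + (2 * lam ^ 3 + 30.196179 * lam ^ 2 + 30.244462 * lam + 1.463482)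
      * Real.exp (-(lam * dI))

/-- For the delay `dI = 0.1`, the characteristic function `ΔE` satisfies
`ΔE(λ) > 0` for every real `λ ≥ 0`; in particular every real root of the
characteristic equation at the endemic equilibrium with `dI = 0.1` is
negative. -/
theorem tb_endemic_char_pos_on_nonneg_reals :
    ∀ lam : ℝ, 0 ≤ lam → 0 < ΔE 0.1 lam := by
  intro lam h
  have hexp : 1 - lam * 0.1 ≤ Real.exp (-(lam * 0.1)) := by
    have := Real.add_one_le_exp (-(lam * 0.1))
    linarith
  have hQ : (0:ℝ) ≤ 2 * lam ^ 3 + 30.196179 * lam ^ 2 + 30.244462 * lam + 1.463482 := by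
    positivity
  unfold ΔE
  nlinarith [mul_le_mul_of_nonneg_left hexp hQ, pow_nonneg h 2, pow_nonneg h 3,
    pow_nonneg h 4]

end TBEndemicDelay
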